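/- The involution σ of the 12-by-10 board defined on points by σ(column c, row r) = (column 11 − c, row 13 − r) maps the 24-point chap set of P0 bijectively onto itself and maps the ball point a2 (column 1, row 2) to j11 (column 10, row 11). Consequently, the position reached from P8 by Alfred's northeast jump — ball at j11, chaps exactly the 24 chaps of P0, Betty to move — is the image of P0 under σ with the roles of Alfred and Betty (and of the top and bottom goallines) interchanged. -/
import Mathlib


/-!
Formalization of Philosophers' Phutball on an `m × n` board (`m` rows, `n` columns).
Points are pairs `(column, row)` of integers, with columns `1, …, n` (a, b, c, …)
and rows `1, …, m` (bottom to top).  Player `true` is Alfred (first player, aims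
for the top row `m`); player `false` is Betty (aims for the bottom row `1`).
-/

/-- A player: `true` is Alfred, `false` is Betty. -/
abbrev Player := Bool

/-- A Phutball position: the ball's point `(column, row)`, the finite set of
chaps, and the player whose turn it is. -/
structure PState where
  ball : ℤ × ℤ
  chaps : Finset (ℤ × ℤ)
  turn : Player
deriving DecidableEq

/-- The eight horizontal, vertical and diagonal directions. -/
def dirs : Finset (ℤ × ℤ) :=
  {(1, 0), (1, 1), (0, 1), (-1, 1), (-1, 0), (-1, -1), (0, -1), (1, -1)}

/-- The point reached from `b` after `i` steps in direction `d`. -/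
def ray (b d : ℤ × ℤ) (i : ℤ) : ℤ × ℤ := (b.1 + i * d.1, b.2 + i * d.2)

/-- A point is on the `m × n` board. -/
def OnBoard (m n : ℤ) (p : ℤ × ℤ) : Prop :=
  1 ≤ p.1 ∧ p.1 ≤ n ∧ 1 ≤ p.2 ∧ p.2 ≤ m

/-- A single hop on a board with `n` columns: the ball at `b` moves in one of the
eight directions `d` over a contiguous nonempty line of `k` chaps, landing on the
first point beyond them that carries no chap; the jumped-over chaps are removed.
The landing point must not lie onto or past the sidelines (outside columns
`1, …, n`), but it may lie past the top or bottom row. -/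
def Hop (n : ℤ) (b : ℤ × ℤ) (c : Finset (ℤ × ℤ)) (b' : ℤ × ℤ) (c' : Finset (ℤ × ℤ)) : Prop :=
  ∃ d ∈ dirs, ∃ k : ℕ, 1 ≤ k ∧
    (∀ i : ℕ, 1 ≤ i → i ≤ k → ray b d i ∈ c) ∧
    ray b d (k + 1) ∉ c ∧
    1 ≤ (ray b d (k + 1)).1 ∧ (ray b d (k + 1)).1 ≤ n ∧
    b' = ray b d (k + 1) ∧
    c' = c \ Finset.image (fun i : ℕ => ray b d i) (Finset.Icc 1 k)

/-- A jump is a nonempty sequence of hops (the player may stop after any hop,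
and the removed chaps cannot be re-used by later hops of the same jump).  The
jump can continue after a hop only if the ball has not been carried past the top
or bottom row (which would end the game immediately). -/
inductive Jump (m n : ℤ) : ℤ × ℤ → Finset (ℤ × ℤ) → ℤ × ℤ → Finset (ℤ × ℤ) → Prop
  | single {b c b' c'} : Hop n b c b' c' → Jump m n b c b' c'
  | cons {b c b₁ c₁ b' c'} : Hop n b c b₁ c₁ → 1 ≤ b₁.2 → b₁.2 ≤ m →
      Jump m n b₁ c₁ b' c' → Jump m n b c b' c'

/-- The winner, if any, of a position (evaluated between turns): Alfred wins if
the ball rests on the top row `m` or has been carried past it; Betty wins if the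
ball rests on the bottom row `1` or has been carried past it. -/
def winner (m : ℤ) (s : PState) : Option Player :=
  if m ≤ s.ball.2 then some true else if s.ball.2 ≤ 1 then some false else none

/-- A single legal move on the `m × n` board: the player to move either places a
chap on a vacant on-board point, or moves the ball by a jump; the turn passes to
the other player. -/
def MoveRel (m n : ℤ) (s t : PState) : Prop :=
  t.turn = !s.turn ∧
    ((∃ p, OnBoard m n p ∧ p ∉ s.chaps ∧ p ≠ s.ball ∧
        t.ball = s.ball ∧ t.chaps = insert p s.chaps) ∨
      Jump m n s.ball s.chaps t.ball t.chaps)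

/-- An infinite record of play: while the game is not over and a legal move
exists, a legal move is made; otherwise the position is frozen forever. -/
def IsPlay (m n : ℤ) (f : ℕ → PState) : Prop :=
  ∀ k,
    (winner m (f k) = none ∧ (∃ t, MoveRel m n (f k) t) ∧ MoveRel m n (f k) (f (k + 1))) ∨
    ((winner m (f k) ≠ none ∨ ¬ ∃ t, MoveRel m n (f k) t) ∧ f (k + 1) = f k)

/-- A strategy for player `p` that always proposes a legal move whenever the game
is not over, it is `p`'s turn, and some legal move exists. -/
def LegalStrategy (m n : ℤ) (p : Player) (σ : PState → PState) : Prop :=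
  ∀ s, s.turn = p → winner m s = none → (∃ t, MoveRel m n s t) → MoveRel m n s (σ s)

/-- The play `f` follows the strategy `σ` of player `p`. -/
def Follows (m n : ℤ) (p : Player) (σ : PState → PState) (f : ℕ → PState) : Prop :=
  ∀ k, (f k).turn = p → winner m (f k) = none → (∃ t, MoveRel m n (f k) t) →
    f (k + 1) = σ (f k)

/-- Player `p` has a winning strategy from `s₀` on the `m × n` board: a legal
strategy guaranteeing that, against every play of the opponent, `p` wins after
finitely many moves. -/
def WinsFrom (m n : ℤ) (p : Player) (s₀ : PState) : Prop :=
  ∃ σ, LegalStrategy m n p σ ∧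
    ∀ f, IsPlay m n f → f 0 = s₀ → Follows m n p σ f → ∃ k, winner m (f k) = some p

/-- Player `p` has a drawing strategy from `s₀` on the `m × n` board: a legal
strategy guaranteeing that the opponent never wins (play may continue forever). -/
def DrawsFrom (m n : ℤ) (p : Player) (s₀ : PState) : Prop :=
  ∃ σ, LegalStrategy m n p σ ∧
    ∀ f, IsPlay m n f → f 0 = s₀ → Follows m n p σ f → ∀ k, winner m (f k) ≠ some (!p)

/-- A position is drawn if both players have drawing strategies from it. -/
def Drawn (m n : ℤ) (s : PState) : Prop :=
  DrawsFrom m n true s ∧ DrawsFrom m n false s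

/-- The 24 chaps of the position `P0` on the 12 × 10 board:
c1, c2, c5, c7, c9, c10, c11, c12, d6, e4, e11, e12, f1, f2, f9, g7,
h1, h2, h3, h4, h6, h8, h11, h12. -/
def P0chaps : Finset (ℤ × ℤ) :=
  {(3, 1), (3, 2), (3, 5), (3, 7), (3, 9), (3, 10), (3, 11), (3, 12), (4, 6), (5, 4), (5, 11), (5, 12), (6, 1), (6, 2), (6, 9), (7, 7), (8, 1), (8, 2), (8, 3), (8, 4), (8, 6), (8, 8), (8, 11), (8, 12)}

/-- The position `P0`: ball at a2 = (1, 2), the 24 chaps above, Alfred to move. -/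
def P0 : PState := ⟨(1, 2), P0chaps, true⟩

/-- The position `P8`: `P0` with additional chaps at b3, c4, d5, e6, f7, g8, h9,
i10, with Alfred to move. -/
def P8 : PState := ⟨(1, 2), P0chaps ∪ {(2, 3), (3, 4), (4, 5), (5, 6), (6, 7), (7, 8), (8, 9), (9, 10)}, true⟩

/-- The point map `σ` of the 12 × 10 board: `(column c, row r) ↦ (11 - c, 13 - r)`. -/
def sigmaPt : ℤ × ℤ → ℤ × ℤ := fun p => (11 - p.1, 13 - p.2)

/-- `σ` is an involution, maps the 24-point chap set of `P0` bijectively onto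
itself, and maps the ball point a2 = (1, 2) to j11 = (10, 11).  Consequently the
position reached from `P8` by Alfred's northeast jump — ball at j11, chaps
exactly the 24 chaps of `P0`, Betty to move — is the image of `P0` under `σ`
with the roles of Alfred and Betty interchanged. -/
theorem sigma_symmetry :
    (∀ p, sigmaPt (sigmaPt p) = p) ∧
    Finset.image sigmaPt P0chaps = P0chaps ∧
    sigmaPt (1, 2) = (10, 11) ∧
    (⟨sigmaPt P0.ball, Finset.image sigmaPt P0.chaps, !P0.turn⟩ : PState) =
      ⟨(10, 11), P0chaps, false⟩ := by
  refine ⟨fun p => by simp [sigmaPt], ?_, by decide, ?_⟩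
  · decide
  · simp [P0, sigmaPt]; decide
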